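/- Properties of the outlier location function: let c₁, c₂ ∈ (0,1) with c₁ + c₂ < 1, set d₊ = (√(c₁(1−c₂)) + √(c₂(1−c₁)))² and r_c = √(c₁c₂/((1−c₁)(1−c₂))), and for r ∈ (0,1] define γ(r) = c₁(1−c₂) + c₂(1−c₁) + r(1−c₁)(1−c₂) + c₁c₂/r, which equals r(1 − c₁ + c₁/r)(1 − c₂ + c₂/r). Then: (a) r_c ∈ (0,1); (b) γ(r) ≥ d₊ for all r ∈ (0,1], with equality if and only if r = r_c; (c) if r_c < r < 1 then d₊ < γ(r) < 1; and (d) γ(1) = 1. -/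

import Mathlib

open MeasureTheory ProbabilityTheory Filter Matrix Polynomial

noncomputable section

namespace CCA

/-- The right edge `d₊` of the limiting spectral distribution. -/
def dPlus (c₁ c₂ : ℝ) : ℝ := (Real.sqrt (c₁ * (1 - c₂)) + Real.sqrt (c₂ * (1 - c₁))) ^ 2

/-- The left edge `d₋` of the limiting spectral distribution. -/
def dMinus (c₁ c₂ : ℝ) : ℝ := (Real.sqrt (c₁ * (1 - c₂)) - Real.sqrt (c₂ * (1 - c₁))) ^ 2

/-- The critical threshold `r_c`. -/
def rCrit (c₁ c₂ : ℝ) : ℝ := Real.sqrt (c₁ * c₂ / ((1 - c₁) * (1 - c₂)))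

/-- The outlier location `γ = r(1-c₁+c₁/r)(1-c₂+c₂/r)`. -/
def gammaVal (c₁ c₂ r : ℝ) : ℝ := r * (1 - c₁ + c₁ / r) * (1 - c₂ + c₂ / r)

/-- Alternative expression for the outlier location. -/
def gammaAlt (c₁ c₂ r : ℝ) : ℝ :=
  c₁ * (1 - c₂) + c₂ * (1 - c₁) + r * ((1 - c₁) * (1 - c₂)) + c₁ * c₂ / r

/-- The variance normalisation `ξ²(r)`. -/
def xiSq (c₁ c₂ r : ℝ) : ℝ :=
  (1 - r) ^ 2 * (2 * (1 - c₁) * (1 - c₂) * r + c₁ + c₂ - 2 * c₁ * c₂) *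
    ((1 - c₁) * (1 - c₂) * r ^ 2 - c₁ * c₂) / r ^ 2

/-- The Tracy–Widom scaling constant `ξ_tw`. -/
def xiTW (c₁ c₂ : ℝ) : ℝ :=
  (dPlus c₁ c₂ ^ 2 * (1 - dPlus c₁ c₂) ^ 2 /
    Real.sqrt (c₁ * c₂ * (1 - c₁) * (1 - c₂))) ^ ((1 : ℝ) / 3)

/-- The estimator map `φ`. -/
def phiEst (c₁ c₂ lam : ℝ) : ℝ :=
  (2 * c₁ * c₂ - c₁ - c₂ + lam +
      Real.sqrt ((lam - dMinus c₁ c₂) * (lam - dPlus c₁ c₂))) /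
    (2 * (c₁ * c₂ - c₁ - c₂ + 1))

/-- The `p × q` population matrix `T = diag(√r₁,…,√r_k) ⊕ 0`. -/
def Tmat (k : ℕ) (r : ℕ → ℝ) (p q : ℕ) : Matrix (Fin p) (Fin q) ℝ :=
  Matrix.of fun i j =>
    if (i : ℕ) = (j : ℕ) ∧ (i : ℕ) < k then Real.sqrt (r ((i : ℕ) + 1)) else 0

/-- The first `k` rows of `T`, a `k × q` matrix. -/
def T1mat (k : ℕ) (r : ℕ → ℝ) (q : ℕ) : Matrix (Fin k) (Fin q) ℝ :=
  Matrix.of fun i j => if (i : ℕ) = (j : ℕ) then Real.sqrt (r ((i : ℕ) + 1)) else 0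

/-- The data matrix `X = W + T Y`. -/
def Xmat (k : ℕ) (r : ℕ → ℝ) {p q n : ℕ} (Wm : Matrix (Fin p) (Fin n) ℝ)
    (Ym : Matrix (Fin q) (Fin n) ℝ) : Matrix (Fin p) (Fin n) ℝ :=
  Wm + Tmat k r p q * Ym

/-- The sample CCA matrix `C_{yx} = S_{yy}⁻¹ S_{yx} S_{xx}⁻¹ S_{xy}` built from the
(scaled) data matrices `X` (p×n) and `Y` (q×n). -/
def Cyx {p q n : ℕ} (Xm : Matrix (Fin p) (Fin n) ℝ) (Ym : Matrix (Fin q) (Fin n) ℝ) :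
    Matrix (Fin q) (Fin q) ℝ :=
  (Ym * Ymᵀ)⁻¹ * (Ym * Xmᵀ) * (Xm * Xmᵀ)⁻¹ * (Xm * Ymᵀ)

/-- The rows of a matrix from row `k` on (0-based), i.e. `W₂`. -/
def rowsFrom (k : ℕ) {p n : ℕ} (A : Matrix (Fin p) (Fin n) ℝ) :
    Matrix (Fin (p - k)) (Fin n) ℝ :=
  Matrix.of fun i j => if h : k + (i : ℕ) < p then A ⟨k + (i : ℕ), h⟩ j else 0

/-- The first `k` rows of a matrix, i.e. `W₁`. -/
def rowsTo (k : ℕ) {p n : ℕ} (A : Matrix (Fin p) (Fin n) ℝ) :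
    Matrix (Fin k) (Fin n) ℝ :=
  Matrix.of fun i j => if h : (i : ℕ) < p then A ⟨(i : ℕ), h⟩ j else 0

/-- Orthogonal projection `Aᵀ (A Aᵀ)⁻¹ A` onto the row space of `A`. -/
def projMat {q n : ℕ} (A : Matrix (Fin q) (Fin n) ℝ) : Matrix (Fin n) (Fin n) ℝ :=
  Aᵀ * (A * Aᵀ)⁻¹ * A

/-- The matrix `𝒜(z) = (P-z) - (P-z)W₂ᵀ(W₂(P-z)W₂ᵀ)⁻¹W₂(P-z)`, over any field. -/
def AmatG {α : Type} [Field α] {m n : ℕ} (Pm : Matrix (Fin n) (Fin n) α)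
    (W2 : Matrix (Fin m) (Fin n) α) (z : α) : Matrix (Fin n) (Fin n) α :=
  (Pm - z • 1) - (Pm - z • 1) * W2ᵀ * (W2 * (Pm - z • 1) * W2ᵀ)⁻¹ * (W2 * (Pm - z • 1))

/-- The matrix `𝒬(z) = I + (P-z)W₂ᵀ(W₂(P-z)W₂ᵀ)⁻¹W₂`. -/
def Qmat {α : Type} [Field α] {m n : ℕ} (Pm : Matrix (Fin n) (Fin n) α)
    (W2 : Matrix (Fin m) (Fin n) α) (z : α) : Matrix (Fin n) (Fin n) α :=
  1 + (Pm - z • 1) * W2ᵀ * (W2 * (Pm - z • 1) * W2ᵀ)⁻¹ * W2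

/-- `𝒵₁ = W₁ + T₁ Y`. -/
def Z1mat (k : ℕ) (r : ℕ → ℝ) {p q n : ℕ} (Wm : Matrix (Fin p) (Fin n) ℝ)
    (Ym : Matrix (Fin q) (Fin n) ℝ) : Matrix (Fin k) (Fin n) ℝ :=
  rowsTo k Wm + T1mat k r q * Ym

/-- The real `k × k` master matrix `M_n(z) = 𝒵₁ 𝒜(z) 𝒵₁′` (real spectral parameter). -/
def MnR (k : ℕ) (r : ℕ → ℝ) {p q n : ℕ} (Wm : Matrix (Fin p) (Fin n) ℝ)
    (Ym : Matrix (Fin q) (Fin n) ℝ) (z : ℝ) : Matrix (Fin k) (Fin k) ℝ :=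
  Z1mat k r Wm Ym * AmatG (projMat Ym) (rowsFrom k Wm) z * (Z1mat k r Wm Ym)ᵀ

/-- The complex `k × k` master matrix `M_n(z) = 𝒵₁ 𝒜(z) 𝒵₁′`. -/
def MnC (k : ℕ) (r : ℕ → ℝ) {p q n : ℕ} (Wm : Matrix (Fin p) (Fin n) ℝ)
    (Ym : Matrix (Fin q) (Fin n) ℝ) (z : ℂ) : Matrix (Fin k) (Fin k) ℂ :=
  (Z1mat k r Wm Ym).map Complex.ofReal *
    AmatG ((projMat Ym).map Complex.ofReal) ((rowsFrom k Wm).map Complex.ofReal) z *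
    ((Z1mat k r Wm Ym).map Complex.ofReal)ᵀ

/-- The limiting function `s(z)` (complex version; on the domain `𝒟(δ)` the principal
branch of the square root agrees with the branch specified in the paper). -/
def sSt (c₁ c₂ : ℝ) (z : ℂ) : ℂ :=
  (z - (c₁ : ℂ) - (c₂ : ℂ) -
      ((z - (dMinus c₁ c₂ : ℝ)) * (z - (dPlus c₁ c₂ : ℝ))) ^ ((1 : ℂ) / 2)) /
    (2 * (z - 1))

/-- The real restriction of `s` to `(d₊, ∞)`. -/
def sRe (c₁ c₂ x : ℝ) : ℝ :=
  (x - c₁ - c₂ - Real.sqrt ((x - dMinus c₁ c₂) * (x - dPlus c₁ c₂))) / (2 * (x - 1))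

/-- `ϱ(z) = ((1-z)/c₂) s(z) - c₁` (complex version). -/
def rhoC (c₁ c₂ : ℝ) (z : ℂ) : ℂ := ((1 - z) / (c₂ : ℂ)) * sSt c₁ c₂ z - (c₁ : ℂ)

/-- `m_i(z) = (c₂-(1+c₁)z-(1-z)s(z))(1-rᵢ) + (1-z)(1-((1-z)/c₂)s(z)) rᵢ`. -/
def mFunC (c₁ c₂ ri : ℝ) (z : ℂ) : ℂ :=
  ((c₂ : ℂ) - (1 + (c₁ : ℂ)) * z - (1 - z) * sSt c₁ c₂ z) * (1 - (ri : ℂ)) +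
    (1 - z) * (1 - ((1 - z) / (c₂ : ℂ)) * sSt c₁ c₂ z) * (ri : ℂ)

/-- The real version of `m_i` on `(d₊, ∞)`. -/
def mFunR (c₁ c₂ ri x : ℝ) : ℝ :=
  (c₂ - (1 + c₁) * x - (1 - x) * sRe c₁ c₂ x) * (1 - ri) +
    (1 - x) * (1 - ((1 - x) / c₂) * sRe c₁ c₂ x) * ri

/-- The limit `š(z)` of the Stieltjes transform of the null MANOVA matrix. -/
def sCheck (c₁ c₂ : ℝ) (z : ℂ) : ℂ :=
  (z - (c₁ : ℂ) - (c₂ : ℂ) -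
      ((z - (dMinus c₁ c₂ : ℝ)) * (z - (dPlus c₁ c₂ : ℝ))) ^ ((1 : ℂ) / 2)) /
    (2 * (c₁ : ℂ) * z * (z - 1)) - 1 / z

/-- The density of the limiting spectral distribution (MANOVA/Wachter law). -/
def manovaDensity (c₁ c₂ x : ℝ) : ℝ :=
  (1 / (2 * Real.pi * c₂)) *
    Real.sqrt ((dPlus c₁ c₂ - x) * (x - dMinus c₁ c₂)) / (x * (1 - x))

/-- The spectral domain `𝒟(δ)`. -/
def domD (c₁ c₂ δ : ℝ) : Set ℂ :=
  {z : ℂ | dPlus c₁ c₂ + δ < z.re ∧ z.re ≤ 2 ∧ |z.im| ≤ 1}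

/-- A sequence of events holds with overwhelming probability. -/
def OverwhelmingProb {Ω : Type} [MeasurableSpace Ω] (μ : Measure Ω)
    (A : ℕ → Set Ω) : Prop :=
  ∀ ℓ : ℝ, 0 < ℓ → ∃ C : ℝ, ∀ n : ℕ, 1 - C * (n : ℝ) ^ (-ℓ) ≤ (μ (A n)).toReal

/-- The high-dimensional finite-rank CCA model of Bao–Hu–Pan–Zhou. -/
structure CCAModel (k : ℕ) (r : ℕ → ℝ) (k₀ : ℕ)
    {Ω : Type} [MeasurableSpace Ω] (μ : Measure Ω) where
  p : ℕ → ℕ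
  q : ℕ → ℕ
  y₁ : ℝ
  y₂ : ℝ
  W : (n : ℕ) → Ω → Matrix (Fin (p n)) (Fin n) ℝ
  Y : (n : ℕ) → Ω → Matrix (Fin (q n)) (Fin n) ℝ
  lam : (n : ℕ) → Fin (q n) → Ω → ℝ
  hr0 : r 0 = 1
  hr_zero : ∀ i : ℕ, k < i → r i = 0
  hr_anti : ∀ ⦃i j : ℕ⦄, i ≤ j → r j ≤ r i
  hr_pos : ∀ i : ℕ, 1 ≤ i → i ≤ k → 0 < r i
  hq_lt_p : ∀ n, q n < p n
  hq_pos : ∀ n, 1 ≤ n → 0 < q n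
  hy₁ : y₁ ∈ Set.Ioo (0 : ℝ) 1
  hy₂ : y₂ ∈ Set.Ioo (0 : ℝ) 1
  hy_sum : y₁ + y₂ < 1
  hc₁ : Tendsto (fun n : ℕ => (p n : ℝ) / n) atTop (nhds y₁)
  hc₂ : Tendsto (fun n : ℕ => (q n : ℝ) / n) atTop (nhds y₂)
  isProb : IsProbabilityMeasure μ
  hW_meas : ∀ n i j, Measurable fun ω => W n ω i j
  hY_meas : ∀ n i j, Measurable fun ω => Y n ω i j
  hW_law : ∀ n, 1 ≤ n → ∀ i j,
      μ.map (fun ω => W n ω i j) =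
        gaussianReal 0 (Real.toNNReal ((1 - r ((i : ℕ) + 1)) / n))
  hY_law : ∀ n, 1 ≤ n → ∀ i j,
      μ.map (fun ω => Y n ω i j) = gaussianReal 0 (Real.toNNReal (1 / n))
  hIndep : ∀ n, iIndepFun
      (Sum.elim (fun ij : Fin (p n) × Fin n => fun ω => W n ω ij.1 ij.2)
        (fun ij : Fin (q n) × Fin n => fun ω => Y n ω ij.1 ij.2)) μ
  hlam_anti : ∀ n ω, Antitone fun i => lam n i ω
  hlam_mem : ∀ n ω i, lam n i ω ∈ Set.Icc (0 : ℝ) 1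
  hlam_eig : ∀ n ω,
      IsUnit (Xmat k r (W n ω) (Y n ω) * (Xmat k r (W n ω) (Y n ω))ᵀ).det →
      IsUnit (Y n ω * (Y n ω)ᵀ).det →
      (Cyx (Xmat k r (W n ω) (Y n ω)) (Y n ω)).charpoly =
        ∏ i, (Polynomial.X - Polynomial.C (lam n i ω))
  hinv : ∀ᶠ n in atTop, ∀ᵐ ω ∂μ,
      IsUnit (Xmat k r (W n ω) (Y n ω) * (Xmat k r (W n ω) (Y n ω))ᵀ).det ∧
      IsUnit (Y n ω * (Y n ω)ᵀ).det
  hk₀_le : k₀ ≤ k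
  hk₀_gap : ∀ᶠ n in atTop,
      rCrit ((p n : ℝ) / n) ((q n : ℝ) / n) < r k₀ ∧
      r (k₀ + 1) ≤ rCrit ((p n : ℝ) / n) ((q n : ℝ) / n)

namespace CCAModel

variable {k : ℕ} {r : ℕ → ℝ} {k₀ : ℕ} {Ω : Type} [MeasurableSpace Ω] {μ : Measure Ω}

/-- The dimension ratio `c₁ = p/n`. -/
def c1 (M : CCAModel k r k₀ μ) (n : ℕ) : ℝ := (M.p n : ℝ) / n

/-- The dimension ratio `c₂ = q/n`. -/
def c2 (M : CCAModel k r k₀ μ) (n : ℕ) : ℝ := (M.q n : ℝ) / n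

/-- `λ_i` (1-based index), with junk value `0` if `i` exceeds the dimension. -/
def lamI (M : CCAModel k r k₀ μ) (n i : ℕ) (ω : Ω) : ℝ :=
  if h : i - 1 < M.q n then M.lam n ⟨i - 1, h⟩ ω else 0

end CCAModel

end CCA

open CCA

/-!
With `a = (1 - c₁)(1 - c₂)` and `b = c₁c₂` one has `d₊ = c₁(1 - c₂) + c₂(1 - c₁) + 2√a√b`, so
completing the square gives `γ(r) = d₊ + (r√a - √b)² / r`: hence `γ ≥ d₊` on `r > 0`, with
equality exactly at `r = √b / √a = r_c`. Moreover `γ(s) - γ(r) = (s - r)(a - b / (rs))`, so `γ`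
is strictly increasing on `[r_c, ∞)`, which squeezes `γ(r)` strictly between `γ(r_c) = d₊` and
`γ(1) = 1` for `r_c < r < 1`.
-/

namespace CCA

variable {c₁ c₂ : ℝ}

lemma gammaAlt_eq_gammaVal {r : ℝ} (hr : r ≠ 0) : gammaAlt c₁ c₂ r = gammaVal c₁ c₂ r := by
  rw [gammaAlt, gammaVal]
  field_simp
  ring

lemma gammaAlt_one (c₁ c₂ : ℝ) : gammaAlt c₁ c₂ 1 = 1 := by
  rw [gammaAlt]
  ring

lemma gammaAlt_sub_gammaAlt {r s : ℝ} (hr : r ≠ 0) (hs : s ≠ 0) :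
    gammaAlt c₁ c₂ s - gammaAlt c₁ c₂ r =
      (s - r) * ((1 - c₁) * (1 - c₂) - c₁ * c₂ / (r * s)) := by
  rw [gammaAlt, gammaAlt]
  field_simp
  ring

lemma rCrit_eq_sqrt_div_sqrt (hb : 0 ≤ c₁ * c₂) :
    rCrit c₁ c₂ = √(c₁ * c₂) / √((1 - c₁) * (1 - c₂)) :=
  Real.sqrt_div hb _

lemma rCrit_mem_Ioo (hb : 0 < c₁ * c₂) (hba : c₁ * c₂ < (1 - c₁) * (1 - c₂)) :
    rCrit c₁ c₂ ∈ Set.Ioo 0 1 := by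
  have ha : 0 < (1 - c₁) * (1 - c₂) := hb.trans hba
  refine ⟨Real.sqrt_pos.2 (div_pos hb ha), ?_⟩
  rw [rCrit, Real.sqrt_lt' one_pos, one_pow]
  exact (div_lt_one ha).2 hba

lemma dPlus_eq (hc₁ : c₁ ∈ Set.Icc 0 1) (hc₂ : c₂ ∈ Set.Icc 0 1) :
    dPlus c₁ c₂ =
      c₁ * (1 - c₂) + c₂ * (1 - c₁) + 2 * (√((1 - c₁) * (1 - c₂)) * √(c₁ * c₂)) := by
  obtain ⟨h₁0, h₁1⟩ := hc₁
  obtain ⟨h₂0, h₂1⟩ := hc₂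
  have hx : 0 ≤ c₁ * (1 - c₂) := mul_nonneg h₁0 (by linarith)
  have hy : 0 ≤ c₂ * (1 - c₁) := mul_nonneg h₂0 (by linarith)
  have hcross :
      √(c₁ * (1 - c₂)) * √(c₂ * (1 - c₁)) = √((1 - c₁) * (1 - c₂)) * √(c₁ * c₂) := by
    rw [← Real.sqrt_mul hx, ← Real.sqrt_mul (mul_nonneg (by linarith) (by linarith))]
    ring_nf
  rw [dPlus, add_sq, Real.sq_sqrt hx, Real.sq_sqrt hy, mul_assoc 2, hcross]
  ring

lemma gammaAlt_eq_dPlus_add (hc₁ : c₁ ∈ Set.Icc 0 1) (hc₂ : c₂ ∈ Set.Icc 0 1) {r : ℝ}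
    (hr : r ≠ 0) :
    gammaAlt c₁ c₂ r =
      dPlus c₁ c₂ + (r * √((1 - c₁) * (1 - c₂)) - √(c₁ * c₂)) ^ 2 / r := by
  have ha : √((1 - c₁) * (1 - c₂)) ^ 2 = (1 - c₁) * (1 - c₂) :=
    Real.sq_sqrt (mul_nonneg (by linarith [hc₁.2]) (by linarith [hc₂.2]))
  have hb : √(c₁ * c₂) ^ 2 = c₁ * c₂ := Real.sq_sqrt (mul_nonneg hc₁.1 hc₂.1)
  rw [gammaAlt, dPlus_eq hc₁ hc₂]
  generalize √((1 - c₁) * (1 - c₂)) = A at ha ⊢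
  generalize √(c₁ * c₂) = B at hb ⊢
  field_simp
  linear_combination (-r ^ 2) * ha - hb

lemma dPlus_le_gammaAlt (hc₁ : c₁ ∈ Set.Icc 0 1) (hc₂ : c₂ ∈ Set.Icc 0 1) {r : ℝ}
    (hr : 0 < r) : dPlus c₁ c₂ ≤ gammaAlt c₁ c₂ r := by
  rw [gammaAlt_eq_dPlus_add hc₁ hc₂ hr.ne']
  exact le_add_of_nonneg_right (div_nonneg (sq_nonneg _) hr.le)

lemma gammaAlt_eq_dPlus_iff (hc₁ : c₁ ∈ Set.Icc 0 1) (hc₂ : c₂ ∈ Set.Icc 0 1)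
    (ha : 0 < (1 - c₁) * (1 - c₂)) {r : ℝ} (hr : 0 < r) :
    gammaAlt c₁ c₂ r = dPlus c₁ c₂ ↔ r = rCrit c₁ c₂ := by
  rw [gammaAlt_eq_dPlus_add hc₁ hc₂ hr.ne', add_eq_left, div_eq_zero_iff, or_iff_left hr.ne',
    pow_eq_zero_iff two_ne_zero, sub_eq_zero, rCrit_eq_sqrt_div_sqrt (mul_nonneg hc₁.1 hc₂.1),
    eq_div_iff (Real.sqrt_pos.2 ha).ne']

lemma gammaAlt_strictMonoOn (hb : 0 < c₁ * c₂) (ha : 0 < (1 - c₁) * (1 - c₂)) :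
    StrictMonoOn (gammaAlt c₁ c₂) (Set.Ici (rCrit c₁ c₂)) := by
  have hrc : rCrit c₁ c₂ ^ 2 = c₁ * c₂ / ((1 - c₁) * (1 - c₂)) :=
    Real.sq_sqrt (div_nonneg hb.le ha.le)
  have hrc0 : 0 < rCrit c₁ c₂ := Real.sqrt_pos.2 (div_pos hb ha)
  intro r (hr : rCrit c₁ c₂ ≤ r) s (hs : rCrit c₁ c₂ ≤ s) hrs
  have hr0 : 0 < r := hrc0.trans_le hr
  have hs0 : 0 < s := hrc0.trans_le hs
  have hrs' : c₁ * c₂ / ((1 - c₁) * (1 - c₂)) < r * s := by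
    rw [← hrc, sq]
    exact mul_lt_mul_of_le_of_lt_of_nonneg_of_pos hr (hr.trans_lt hrs) hrc0.le hr0
  have hpos : 0 < (1 - c₁) * (1 - c₂) - c₁ * c₂ / (r * s) := by
    rw [sub_pos, div_lt_iff₀ (mul_pos hr0 hs0)]
    linarith [(div_lt_iff₀ ha).1 hrs']
  have := gammaAlt_sub_gammaAlt (c₁ := c₁) (c₂ := c₂) hr0.ne' hs0.ne'
  nlinarith [mul_pos (sub_pos.2 hrs) hpos]

end CCA

/-- properties of the outlier location function: for
`c₁, c₂ ∈ (0,1)` with `c₁ + c₂ < 1` and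
`γ(r) = c₁(1−c₂) + c₂(1−c₁) + r(1−c₁)(1−c₂) + c₁c₂/r`:
(a) `r_c ∈ (0,1)`; (b) `γ(r) ≥ d₊` on `(0,1]` with equality iff `r = r_c`;
(c) `d₊ < γ(r) < 1` for `r_c < r < 1`; (d) `γ(1) = 1`; moreover `γ` agrees with
`r(1−c₁+c₁/r)(1−c₂+c₂/r)` for `r > 0`. -/
theorem gamma_properties (c₁ c₂ : ℝ)
    (hc₁ : c₁ ∈ Set.Ioo (0 : ℝ) 1) (hc₂ : c₂ ∈ Set.Ioo (0 : ℝ) 1)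
    (hsum : c₁ + c₂ < 1) :
    rCrit c₁ c₂ ∈ Set.Ioo (0 : ℝ) 1 ∧
    (∀ r : ℝ, 0 < r → r ≤ 1 →
      dPlus c₁ c₂ ≤ gammaAlt c₁ c₂ r ∧
      (gammaAlt c₁ c₂ r = dPlus c₁ c₂ ↔ r = rCrit c₁ c₂)) ∧
    (∀ r : ℝ, rCrit c₁ c₂ < r → r < 1 →
      dPlus c₁ c₂ < gammaAlt c₁ c₂ r ∧ gammaAlt c₁ c₂ r < 1) ∧
    gammaAlt c₁ c₂ 1 = 1 ∧
    (∀ r : ℝ, 0 < r → gammaAlt c₁ c₂ r = gammaVal c₁ c₂ r) := by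
  have hb : 0 < c₁ * c₂ := mul_pos hc₁.1 hc₂.1
  have hba : c₁ * c₂ < (1 - c₁) * (1 - c₂) := by
    linarith [show (1 - c₁) * (1 - c₂) - c₁ * c₂ = 1 - c₁ - c₂ by ring]
  have ha : 0 < (1 - c₁) * (1 - c₂) := hb.trans hba
  have hc₁' := Set.Ioo_subset_Icc_self hc₁
  have hc₂' := Set.Ioo_subset_Icc_self hc₂
  have hrc := rCrit_mem_Ioo hb hba
  refine ⟨hrc,
    fun r hr _ => ⟨dPlus_le_gammaAlt hc₁' hc₂' hr, gammaAlt_eq_dPlus_iff hc₁' hc₂' ha hr⟩,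
    fun r hcr hr1 => ⟨?_, ?_⟩, gammaAlt_one c₁ c₂, fun r hr => gammaAlt_eq_gammaVal hr.ne'⟩
  · have hr := hrc.1.trans hcr
    exact (dPlus_le_gammaAlt hc₁' hc₂' hr).lt_of_ne fun h =>
      hcr.ne' ((gammaAlt_eq_dPlus_iff hc₁' hc₂' ha hr).1 h.symm)
  · rw [← gammaAlt_one c₁ c₂]
    exact gammaAlt_strictMonoOn hb ha hcr.le (hcr.le.trans hr1.le) hr1
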